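/- For any two sequences (a_n) and (b_n) of real numbers, the following inversion holds: if b_n = ∑_{k=0}^{n} C(n,k) (1-λ)_{n-k,λ} a_k for all n ≥ 0, then a_n = ∑_{k=0}^{n} C(n,k) (-1)^{n-k} ⟨1-λ⟩_{n-k,λ} b_k for all n ≥ 0. -/

import Mathlib

open Finset

/-- Generalized falling factorial `(x)_{n,lam} = x(x-lam)...(x-(n-1)lam)`. -/
noncomputable def dfall (lam x : ℝ) (n : ℕ) : ℝ := ∏ i ∈ Finset.range n, (x - i * lam)

/-- Generalized rising factorial `⟨x⟩_{n,lam} = x(x+lam)...(x+(n-1)lam)`. -/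
noncomputable def drise (lam x : ℝ) (n : ℕ) : ℝ := ∏ i ∈ Finset.range n, (x + i * lam)

lemma dfall_succ (lam x : ℝ) (n : ℕ) : dfall lam x (n + 1) = dfall lam x n * (x - n * lam) := by
  simp [dfall, Finset.prod_range_succ]

lemma dfall_zero' (lam : ℝ) (n : ℕ) : dfall lam 0 n = if n = 0 then 1 else 0 := by
  cases n with
  | zero => simp [dfall]
  | succ m =>
    simp only [dfall, Nat.succ_ne_zero, if_false]
    apply Finset.prod_eq_zero (Finset.mem_range.mpr (Nat.succ_pos m))
    simp

lemma neg_one_pow_drise (lam x : ℝ) (n : ℕ) :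
    (-1 : ℝ) ^ n * drise lam x n = dfall lam (-x) n := by
  rw [drise, dfall, show ((-1 : ℝ)) ^ n = ∏ _i ∈ Finset.range n, (-1 : ℝ) by
    simp, ← Finset.prod_mul_distrib]
  apply Finset.prod_congr rfl
  intro i _
  ring

/-- Generalized Vandermonde identity for `dfall`. -/
lemma dfall_add (lam x y : ℝ) : ∀ n : ℕ, dfall lam (x + y) n =
    ∑ k ∈ Finset.range (n + 1), (n.choose k : ℝ) * dfall lam x k * dfall lam y (n - k) := by
  intro n
  induction n with
  | zero => simp [dfall]
  | succ n ih =>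
    rw [dfall_succ, ih, Finset.sum_mul]
    have key : ∀ k ∈ Finset.range (n + 1),
        (n.choose k : ℝ) * dfall lam x k * dfall lam y (n - k) * (x + y - n * lam)
        = (n.choose k : ℝ) * dfall lam x (k + 1) * dfall lam y (n - k)
          + (n.choose k : ℝ) * dfall lam x k * dfall lam y (n - k + 1) := by
      intro k hk
      have hk' : k ≤ n := Nat.lt_succ_iff.mp (Finset.mem_range.mp hk)
      have hc : ((n - k : ℕ) : ℝ) = (n : ℝ) - k := by
        rw [Nat.cast_sub hk']
      rw [dfall_succ, dfall_succ, hc]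
      ring
    rw [Finset.sum_congr rfl key, Finset.sum_add_distrib]
    -- RHS over range (n+2): peel off the k = 0 term
    rw [show n + 1 + 1 = n + 2 from rfl]
    rw [Finset.sum_range_succ' (fun k => ((n+1).choose k : ℝ) * dfall lam x k *
        dfall lam y (n + 1 - k)) (n + 1)]
    have hsplit : ∀ k ∈ Finset.range (n + 1),
        (((n+1).choose (k+1) : ℝ)) * dfall lam x (k+1) * dfall lam y (n + 1 - (k+1))
        = (n.choose k : ℝ) * dfall lam x (k+1) * dfall lam y (n - k)
          + (n.choose (k+1) : ℝ) * dfall lam x (k+1) * dfall lam y (n - k) := by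
      intro k hk
      have hcc : (n+1).choose (k+1) = n.choose k + n.choose (k+1) := Nat.choose_succ_succ n k
      have hsub : n + 1 - (k + 1) = n - k := by omega
      rw [hcc, hsub]
      push_cast
      ring
    rw [Finset.sum_congr rfl hsplit, Finset.sum_add_distrib]
    -- It remains to identify the B-sum
    have hB : ∑ k ∈ Finset.range (n + 1),
        (n.choose k : ℝ) * dfall lam x k * dfall lam y (n - k + 1)
        = (∑ k ∈ Finset.range (n + 1),
            (n.choose (k+1) : ℝ) * dfall lam x (k+1) * dfall lam y (n - k))
          + ((n+1).choose 0 : ℝ) * dfall lam x 0 * dfall lam y (n + 1 - 0) := by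
      rw [Finset.sum_range_succ' (fun k => (n.choose k : ℝ) * dfall lam x k *
          dfall lam y (n - k + 1)) n]
      have h1 : ∀ i ∈ Finset.range n,
          (n.choose (i+1) : ℝ) * dfall lam x (i+1) * dfall lam y (n - (i+1) + 1)
          = (n.choose (i+1) : ℝ) * dfall lam x (i+1) * dfall lam y (n - i) := by
        intro i hi
        have : n - (i + 1) + 1 = n - i := by
          have := Finset.mem_range.mp hi; omega
        rw [this]
      rw [Finset.sum_congr rfl h1]
      rw [Finset.sum_range_succ (fun k =>
          (n.choose (k+1) : ℝ) * dfall lam x (k+1) * dfall lam y (n - k)) n]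
      simp
    rw [hB]
    ring
/-- The kernel orthogonality sum. -/
lemma kernel_sum (lam : ℝ) (n j : ℕ) (hj : j ≤ n) :
    ∑ k ∈ Finset.range (n + 1),
      (n.choose k : ℝ) * dfall lam (lam - 1) (n - k) * ((k.choose j : ℝ) *
        dfall lam (1 - lam) (k - j))
    = if j = n then 1 else 0 := by
  have hsub : Finset.Icc j n ⊆ Finset.range (n + 1) := by
    intro x hx
    simp only [Finset.mem_Icc] at hx
    simp only [Finset.mem_range]
    omega
  have hvanish : ∀ k ∈ Finset.range (n + 1), k ∉ Finset.Icc j n →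
      (n.choose k : ℝ) * dfall lam (lam - 1) (n - k) * ((k.choose j : ℝ) *
        dfall lam (1 - lam) (k - j)) = 0 := by
    intro k hk hk'
    have hk1 : k < n + 1 := Finset.mem_range.mp hk
    have : k < j := by
      simp only [Finset.mem_Icc, not_and_or, not_le] at hk'
      omega
    rw [Nat.choose_eq_zero_of_lt this]
    simp
  rw [← Finset.sum_subset hsub hvanish]
  rw [show Finset.Icc j n = Finset.Ico j (n + 1) by rfl]
  rw [Finset.sum_Ico_eq_sum_range]
  have hterm : ∀ i ∈ Finset.range (n + 1 - j),
      (n.choose (j + i) : ℝ) * dfall lam (lam - 1) (n - (j + i)) * (((j + i).choose j : ℝ) *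
        dfall lam (1 - lam) (j + i - j))
      = (n.choose j : ℝ) * (((n - j).choose i : ℝ) * dfall lam (1 - lam) i *
          dfall lam (lam - 1) (n - j - i)) := by
    intro i hi
    have hi' : i < n + 1 - j := Finset.mem_range.mp hi
    have h1 : j + i - j = i := by omega
    have h2 : n - (j + i) = n - j - i := by omega
    have h3 : j ≤ j + i := Nat.le_add_right j i
    have h4 : j + i ≤ n := by omega
    have hcc : n.choose (j + i) * (j + i).choose j = n.choose j * (n - j).choose (j + i - j) :=
      Nat.choose_mul h3
    rw [h1, h2]
    rw [h1] at hcc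
    have hccR : (n.choose (j+i) : ℝ) * ((j+i).choose j : ℝ)
        = (n.choose j : ℝ) * ((n-j).choose i : ℝ) := by
      exact_mod_cast congrArg (Nat.cast : ℕ → ℝ) hcc
    calc (n.choose (j + i) : ℝ) * dfall lam (lam - 1) (n - j - i) * (((j + i).choose j : ℝ) *
          dfall lam (1 - lam) i)
        = ((n.choose (j+i) : ℝ) * ((j+i).choose j : ℝ)) * dfall lam (lam - 1) (n - j - i) *
          dfall lam (1 - lam) i := by ring
      _ = ((n.choose j : ℝ) * ((n-j).choose i : ℝ)) * dfall lam (lam - 1) (n - j - i) *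
          dfall lam (1 - lam) i := by rw [hccR]
      _ = (n.choose j : ℝ) * (((n - j).choose i : ℝ) * dfall lam (1 - lam) i *
          dfall lam (lam - 1) (n - j - i)) := by ring
  rw [Finset.sum_congr rfl hterm, ← Finset.mul_sum]
  have hnj : n + 1 - j = (n - j) + 1 := by omega
  rw [hnj, ← dfall_add lam (1 - lam) (lam - 1) (n - j)]
  have hz : (1 - lam) + (lam - 1) = (0 : ℝ) := by ring
  rw [hz, dfall_zero']
  rcases eq_or_ne j n with rfl | hne
  · simp
  · have : n - j ≠ 0 := by omega
    simp [this, hne]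

theorem stmt6 (lam : ℝ) (a b : ℕ → ℝ)
    (h : ∀ n : ℕ, b n = ∑ k ∈ Finset.range (n + 1),
      (n.choose k : ℝ) * dfall lam (1 - lam) (n - k) * a k) :
    ∀ n : ℕ, a n = ∑ k ∈ Finset.range (n + 1),
      (n.choose k : ℝ) * (-1 : ℝ) ^ (n - k) * drise lam (1 - lam) (n - k) * b k := by
  intro n
  have hdr : ∀ m : ℕ, (-1 : ℝ) ^ m * drise lam (1 - lam) m = dfall lam (lam - 1) m := by
    intro m
    have := neg_one_pow_drise lam (1 - lam) m
    rwa [show -(1 - lam) = lam - 1 by ring] at this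
  -- rewrite the RHS
  have step1 : ∑ k ∈ Finset.range (n + 1),
      (n.choose k : ℝ) * (-1 : ℝ) ^ (n - k) * drise lam (1 - lam) (n - k) * b k
      = ∑ k ∈ Finset.range (n + 1),
        (n.choose k : ℝ) * dfall lam (lam - 1) (n - k) *
          (∑ j ∈ Finset.range (k + 1), (k.choose j : ℝ) * dfall lam (1 - lam) (k - j) * a j) := by
    apply Finset.sum_congr rfl
    intro k _
    rw [h k, ← hdr (n - k)]
    ring
  rw [step1]
  -- extend inner sum to range (n+1)
  have step2 : ∀ k ∈ Finset.range (n + 1),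
      (n.choose k : ℝ) * dfall lam (lam - 1) (n - k) *
        (∑ j ∈ Finset.range (k + 1), (k.choose j : ℝ) * dfall lam (1 - lam) (k - j) * a j)
      = ∑ j ∈ Finset.range (n + 1),
          (n.choose k : ℝ) * dfall lam (lam - 1) (n - k) *
            ((k.choose j : ℝ) * dfall lam (1 - lam) (k - j) * a j) := by
    intro k hk
    have hk1 : k + 1 ≤ n + 1 := by
      have := Finset.mem_range.mp hk; omega
    rw [Finset.mul_sum]
    apply Finset.sum_subset (Finset.range_subset_range.mpr hk1)
    intro j hj hj'
    have : k < j := by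
      simp only [Finset.mem_range, not_lt] at hj' ⊢
      omega
    rw [Nat.choose_eq_zero_of_lt this]
    simp
  rw [Finset.sum_congr rfl step2, Finset.sum_comm]
  have step3 : ∀ j ∈ Finset.range (n + 1),
      ∑ k ∈ Finset.range (n + 1),
        (n.choose k : ℝ) * dfall lam (lam - 1) (n - k) *
          ((k.choose j : ℝ) * dfall lam (1 - lam) (k - j) * a j)
      = (if j = n then 1 else 0) * a j := by
    intro j hj
    have hjn : j ≤ n := by
      have := Finset.mem_range.mp hj; omega
    have hre : ∀ k ∈ Finset.range (n + 1),
        (n.choose k : ℝ) * dfall lam (lam - 1) (n - k) *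
          ((k.choose j : ℝ) * dfall lam (1 - lam) (k - j) * a j)
        = ((n.choose k : ℝ) * dfall lam (lam - 1) (n - k) *
            ((k.choose j : ℝ) * dfall lam (1 - lam) (k - j))) * a j := by
      intro k _
      ring
    rw [Finset.sum_congr rfl hre, ← Finset.sum_mul, kernel_sum lam n j hjn]
  rw [Finset.sum_congr rfl step3]
  simp
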